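/- Let x = (x¹, x²) be a pair of vectors in ℝ³, forming a 3×2 matrix, and let Δ₃ = x₁¹x₂² − x₁²x₂¹, Δ₂ = x₁¹x₃² − x₁²x₃¹, Δ₁ = x₂¹x₃² − x₂²x₃¹ be its three 2×2 minors. Let Φ: ℝ³ → ℝ be C¹, F(x) = Φ(Δ₃, Δ₂, Δ₁), and y the 2×3 matrix of partial derivatives y_k^n = ∂F/∂x_n^k. Then the three 2×2 minors D¹ = y₁²y₂³ − y₂²y₁³, D² = y₁¹y₂³ − y₂¹y₁³, D³ = y₁¹y₂² − y₂¹y₁² of y satisfy Dⁿ = (∂Φ/∂Δ_n) · (Σ_{m=1}^{3} (∂Φ/∂Δ_m) Δ_m) for n = 1, 2, 3. -/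

import Mathlib

/-! By the chain rule `yₖⁿ = ∑ₘ (∂Φ/∂Δₘ) ∂Δₘ/∂xₙᵏ`, and the partial derivatives of a `2×2` minor
are entries of `x`, so `y` is bilinear in the gradient `g` of `Φ` and in `x`. In vector language,
with `g̃ = (g₁, -g₂, g₃)` the rows of `y` are `x² × g̃` and `g̃ × x¹`, and up to the same signs
the claim is the identity `(a × b) × (b × c) = (a · (b × c)) b`; once `y` is written out it is a
polynomial identity. -/

attribute [local instance] Matrix.normedAddCommGroup Matrix.normedSpace

/-- The three `2×2` minors `Δ₁, Δ₂, Δ₃` (at indices `0, 1, 2`) of a `3×2` matrix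
`x = (x¹, x²)` of two vectors in `ℝ³`. -/
def minors32 (x : Matrix (Fin 3) (Fin 2) ℝ) : Fin 3 → ℝ :=
  ![x 1 0 * x 2 1 - x 1 1 * x 2 0,   -- Δ₁ = x₂¹x₃² − x₂²x₃¹
    x 0 0 * x 2 1 - x 0 1 * x 2 0,   -- Δ₂ = x₁¹x₃² − x₁²x₃¹
    x 0 0 * x 1 1 - x 0 1 * x 1 0]   -- Δ₃ = x₁¹x₂² − x₁²x₂¹

section Matrix

variable {𝕜 : Type*} [NontriviallyNormedField 𝕜] {m n : Type*}

def Matrix.entryCLM (i : m) (j : n) : Matrix m n 𝕜 →L[𝕜] 𝕜 :=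
  (ContinuousLinearMap.proj j).comp (ContinuousLinearMap.proj i : Matrix m n 𝕜 →L[𝕜] n → 𝕜)

@[simp]
theorem Matrix.entryCLM_apply (i : m) (j : n) (z : Matrix m n 𝕜) :
    Matrix.entryCLM i j z = z i j :=
  rfl

variable [Fintype m]

theorem hasFDerivAt_minor (i j : m) (x : Matrix m (Fin 2) 𝕜) :
    HasFDerivAt (fun z : Matrix m (Fin 2) 𝕜 => z i 0 * z j 1 - z i 1 * z j 0)
      (x i 0 • Matrix.entryCLM j 1 + x j 1 • Matrix.entryCLM i 0
        - (x i 1 • Matrix.entryCLM j 0 + x j 0 • Matrix.entryCLM i 1)) x := by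
  have entry (a : m) (b : Fin 2) :
      HasFDerivAt (fun z : Matrix m (Fin 2) 𝕜 => z a b) (Matrix.entryCLM a b) x :=
    (Matrix.entryCLM (𝕜 := 𝕜) (n := Fin 2) a b).hasFDerivAt
  exact ((entry i 0).mul (entry j 1)).sub ((entry i 1).mul (entry j 0))

theorem fderiv_minor_apply (i j : m) (x v : Matrix m (Fin 2) 𝕜) :
    fderiv 𝕜 (fun z : Matrix m (Fin 2) 𝕜 => z i 0 * z j 1 - z i 1 * z j 0) x v =
      x i 0 * v j 1 + x j 1 * v i 0 - (x i 1 * v j 0 + x j 0 * v i 1) := by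
  simp [(hasFDerivAt_minor i j x).fderiv]

end Matrix

section ChainRule

variable {𝕜 E ι : Type*} [NontriviallyNormedField 𝕜] [NormedAddCommGroup E] [NormedSpace 𝕜 E]
  [Fintype ι] [DecidableEq ι]

theorem ContinuousLinearMap.apply_eq_sum_apply_single_mul (L : (ι → 𝕜) →L[𝕜] 𝕜) (v : ι → 𝕜) :
    L v = ∑ k, L (Pi.single k 1) * v k := by
  conv_lhs => rw [pi_eq_sum_univ' v]
  simp [mul_comm]

theorem fderiv_comp_apply_eq_sum {Φ : (ι → 𝕜) → 𝕜} {f : E → ι → 𝕜} {x : E}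
    (hΦ : DifferentiableAt 𝕜 Φ (f x)) (hf : DifferentiableAt 𝕜 f x) (v : E) :
    fderiv 𝕜 (fun z => Φ (f z)) x v =
      ∑ k, fderiv 𝕜 Φ (f x) (Pi.single k 1) * fderiv 𝕜 (fun z => f z k) x v := by
  rw [fderiv_fun_comp x hΦ hf, ContinuousLinearMap.comp_apply,
    ContinuousLinearMap.apply_eq_sum_apply_single_mul]
  simp [fderiv_apply hf]

end ChainRule

theorem minors32_apply (z : Matrix (Fin 3) (Fin 2) ℝ) (k : Fin 3) :
    minors32 z k =
      z (![1, 0, 0] k) 0 * z (![2, 2, 1] k) 1 - z (![1, 0, 0] k) 1 * z (![2, 2, 1] k) 0 := by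
  fin_cases k <;> rfl

theorem differentiable_minors32 : Differentiable ℝ minors32 := by
  refine differentiable_pi.2 fun k x => ?_
  simp_rw [minors32_apply]
  exact (hasFDerivAt_minor _ _ x).differentiableAt

theorem minors_of_gradient (Φ : (Fin 3 → ℝ) → ℝ) (hΦ : ContDiff ℝ 1 Φ)
    (x : Matrix (Fin 3) (Fin 2) ℝ)
    (y : Matrix (Fin 2) (Fin 3) ℝ)
    (hy : ∀ k n, y k n =
      fderiv ℝ (fun z : Matrix (Fin 3) (Fin 2) ℝ => Φ (minors32 z)) x
        (Matrix.single n k 1))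
    (g : Fin 3 → ℝ) (hg : ∀ m, g m = fderiv ℝ Φ (minors32 x) (Pi.single m 1))
    (D : Fin 3 → ℝ)
    (hD1 : D 0 = y 0 1 * y 1 2 - y 1 1 * y 0 2)   -- D¹ = y₁²y₂³ − y₂²y₁³
    (hD2 : D 1 = y 0 0 * y 1 2 - y 1 0 * y 0 2)   -- D² = y₁¹y₂³ − y₂¹y₁³
    (hD3 : D 2 = y 0 0 * y 1 1 - y 1 0 * y 0 1) : -- D³ = y₁¹y₂² − y₂¹y₁²
    ∀ n, D n = g n * ∑ m, g m * minors32 x m := by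
  have chain_rule : ∀ k n,
      y k n = ∑ m, g m * fderiv ℝ (fun z => minors32 z m) x (Matrix.single n k 1) := by
    intro k n
    simp only [hy, hg]
    exact fderiv_comp_apply_eq_sum (hΦ.differentiable one_ne_zero _) (differentiable_minors32 x) _
  simp_rw [minors32_apply, fderiv_minor_apply] at chain_rule
  intro n
  fin_cases n <;>
    simp only [Fin.zero_eta, Fin.mk_one, Fin.reduceFinMk, hD1, hD2, hD3, chain_rule,
      Fin.sum_univ_three, minors32_apply, Matrix.single_apply, Matrix.cons_val_zero,
      Matrix.cons_val_one, Matrix.cons_val_two, Matrix.tail_cons, Matrix.head_cons, Fin.isValue,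
      Fin.reduceEq, and_true, and_false, ↓reduceIte] <;> ring
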